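/- If B is a differential basis of A over k (i.e., Ω_{A/k} is a free A-module with basis {d_{A/k}(b) : b ∈ B}), then B is p-independent over k, i.e., the p-monomials in B are linearly independent over A^p[k]. -/

import Mathlib

open scoped TensorProduct

/-- The monomial `∏ b^(α b)` associated to a finitely supported exponent tuple on `B`. -/
noncomputable def pMonomial {A : Type*} [CommRing A] {B : Set A} (α : B →₀ ℕ) : A :=
  α.prod fun b n => (b : A) ^ n

/-- `B` is `p`-independent over `k`: the `p`-monomials in `B` are linearly independent
over the subring `A^p[k]`. -/
def IsPIndependent (k : Type*) {A : Type*} [CommRing k] [CommRing A] [Algebra k A]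
    (p : ℕ) (B : Set A) : Prop :=
  LinearIndependent (Algebra.adjoin k (Set.range fun a : A => a ^ p))
    (fun α : {α : B →₀ ℕ // ∀ b, α b < p} => pMonomial α.1)

/-- `B` is a `p`-basis of `A` over `k`. -/
def IsPBasis (k : Type*) {A : Type*} [CommRing k] [CommRing A] [Algebra k A]
    (p : ℕ) (B : Set A) : Prop :=
  IsPIndependent k p B ∧
    Algebra.adjoin k ((Set.range fun a : A => a ^ p) ∪ B) = ⊤

/-- An absolute `p`-basis: a `p`-basis over the prime field (equivalently over `ℤ`). -/
def IsAbsolutePBasis {A : Type*} [CommRing A] (p : ℕ) (B : Set A) : Prop :=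
  IsPBasis ℤ p B

/-- `B` is a differential basis of `A` over `k`. -/
def IsDifferentialBasis (k : Type*) {A : Type*} [CommRing k] [CommRing A] [Algebra k A]
    (B : Set A) : Prop :=
  ∃ bas : Module.Basis B A (KaehlerDifferential k A),
    ∀ b : B, bas b = KaehlerDifferential.D k A (b : A)

/-- Regular local ring: noetherian local ring whose maximal ideal is generated by
(Krull-)dimension many elements. -/
def IsRegularLocalRing' (R : Type*) [CommRing R] : Prop :=
  IsLocalRing R ∧ IsNoetherianRing R ∧
    ∃ (n : ℕ) (z : Fin n → R), (Ideal.span (Set.range z)).IsMaximal ∧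
      ringKrullDim R = n

/-- Regular ring: noetherian and all localizations at primes are regular local. -/
def IsRegularRing' (A : Type*) [CommRing A] : Prop :=
  IsNoetherianRing A ∧ ∀ (P : Ideal A) (hP : P.IsPrime), IsRegularLocalRing' (Localization.AtPrime P)

/-- Differential operators of order at most `n` over `k`, defined inductively. -/
def IsDiffOp (k A M : Type*) [CommRing k] [CommRing A] [Algebra k A]
    [AddCommGroup M] [Module A M] [Module k M] [IsScalarTower k A M] :
    ℕ → (A → M) → Prop
  | 0, D => IsLinearMap A D
  | (n + 1), D => IsLinearMap k D ∧
      ∀ a : A, IsDiffOp k A M n (fun f => a • D f - D (a * f))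

/-- Product of binomial coefficients `∏_b C(α_b, β_b)`. -/
noncomputable def pBinom {A : Type*} [CommRing A] {B : Set A} (α β : B →₀ ℕ) : ℕ :=
  letI := Classical.decEq A
  ∏ b ∈ α.support ∪ β.support, Nat.choose (α b) (β b)

/-- Product of multinomial coefficients `∏_b (β_b+β'_b)!/(β_b!β'_b!)`. -/
noncomputable def pMultinom {A : Type*} [CommRing A] {B : Set A} (β β' : B →₀ ℕ) : ℕ :=
  letI := Classical.decEq A
  ∏ b ∈ β.support ∪ β'.support, Nat.choose (β b + β' b) (β b)

/-- Height of an ideal: the infimum of the Krull dimensions of localizations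
at primes containing it. -/
noncomputable def idealHeight {R : Type*} [CommRing R] (I : Ideal R) : WithBot (WithTop ℕ) :=
  ⨅ Q : {Q : Ideal R // Q.IsPrime ∧ I ≤ Q},
    ringKrullDim (Localization (@Ideal.primeCompl R _ Q.1 Q.2.1))

/-- Differential saturation of an ideal by absolute differential operators of order `≤ n`. -/
noncomputable def diffSat {A : Type*} [CommRing A] (n : ℕ) (I : Ideal A) : Ideal A :=
  Ideal.span {g | ∃ f ∈ I, ∃ Δ : A → A, IsDiffOp ℤ A A n Δ ∧ g = Δ f}

open scoped Classical

section aux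
/-!
Dualising the basis `d b` of `Ω_{A/k}` gives `k`-derivations `∂_b : A → A` with
`∂_b b' = δ_{b b'}`. They vanish on `A^p[k]`, since `∂ (x ^ p) = p x ^ (p - 1) ∂ x = 0`, and they
lower exponents: `∂_b (B ^ α) = α_b B ^ (α - e_b)`. Applying `∂_b` to a relation
`∑ g_α B ^ α = 0` with `g_α ∈ A^p[k]` and all `α_b < p` therefore gives a relation of smaller
degree with coefficients `α_b g_α`, where `α_b` is a unit of `A` because `0 < α_b < p`. Induction
on the degree kills every `g_α` with `α ≠ 0`, and then the relation reads `g_0 = 0`.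
-/

section Monomial

variable {A : Type*} [CommRing A] {B : Set A}

lemma pMonomial_zero : pMonomial (0 : B →₀ ℕ) = 1 :=
  Finsupp.prod_zero_index

lemma pMonomial_add (α β : B →₀ ℕ) : pMonomial (α + β) = pMonomial α * pMonomial β :=
  Finsupp.prod_add_index' (fun _ => pow_zero _) (fun _ _ _ => pow_add _ _ _)

lemma pMonomial_single (b : B) (n : ℕ) : pMonomial (Finsupp.single b n) = (b : A) ^ n :=
  Finsupp.prod_single_index (pow_zero _)

lemma Finsupp.sub_single_one_add_single_one {ι : Type*} {α : ι →₀ ℕ} {i : ι} (h : α i ≠ 0) :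
    α - Finsupp.single i 1 + Finsupp.single i 1 = α :=
  tsub_add_cancel_of_le (Finsupp.single_le_iff.2 (Nat.one_le_iff_ne_zero.2 h))

end Monomial

section Derivation

variable {k A : Type*} [CommRing k] [CommRing A] [Algebra k A]

lemma Derivation.map_eq_zero_of_mem_adjoin_pow {M : Type*} [AddCommGroup M] [Module A M]
    [Module k M] [IsScalarTower k A M] (p : ℕ) [CharP A p] (D : Derivation k A M) {a : A}
    (ha : a ∈ Algebra.adjoin k (Set.range fun x : A => x ^ p)) : D a = 0 := by
  induction ha using Algebra.adjoin_induction with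
  | mem x hx =>
    obtain ⟨y, rfl⟩ := hx
    rw [D.leibniz_pow, ← Nat.cast_smul_eq_nsmul A, CharP.cast_eq_zero, zero_smul]
  | algebraMap r => exact D.map_algebraMap r
  | add x y _ _ hx hy => rw [map_add, hx, hy, add_zero]
  | mul x y _ _ hx hy => rw [D.leibniz, hx, hy, smul_zero, smul_zero, add_zero]

variable {B : Set A} (D : Derivation k A A)

lemma Derivation.map_pMonomial_eq_zero {α : B →₀ ℕ} (hα : ∀ b ∈ α.support, D b = 0) :
    D (pMonomial α) = 0 :=
  Finset.prod_induction _ (fun x => D x = 0)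
    (fun x y hx hy => by rw [D.leibniz, hx, hy, smul_zero, smul_zero, add_zero])
    D.map_one_eq_zero
    (fun b hb => by rw [D.leibniz_pow, hα b hb, smul_zero, smul_zero])

lemma Derivation.map_pMonomial {b : B} (hb : D b = 1) (hD : ∀ b' ≠ b, D b' = 0)
    (α : B →₀ ℕ) : D (pMonomial α) = α b * pMonomial (α - Finsupp.single b 1) := by
  have herase : D (pMonomial (α.erase b)) = 0 :=
    D.map_pMonomial_eq_zero fun b' hb' => hD b' (by rintro rfl; simp at hb')
  have hsub : α - Finsupp.single b 1 = α.erase b + Finsupp.single b (α b - 1) := by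
    ext x
    by_cases hx : x = b
    · subst hx; simp
    · simp [Finsupp.erase_ne hx, Finsupp.single_eq_of_ne hx]
  conv_lhs => rw [← Finsupp.erase_add_single b α]
  rw [hsub, pMonomial_add, pMonomial_add, pMonomial_single, pMonomial_single, D.leibniz,
    herase, D.leibniz_pow, hb, smul_zero, add_zero, smul_eq_mul, nsmul_eq_mul]
  ring

end Derivation

section Independence

variable {k A : Type*} [CommRing k] [CommRing A] [Algebra k A] {B : Set A} {S : Subalgebra k A}

lemma eq_zero_of_sum_smul_pMonomial_eq_zero_of_ne_zero {s : Finset (B →₀ ℕ)} {g : (B →₀ ℕ) → S}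
    (hsum : ∑ α ∈ s, g α • pMonomial α = 0) (hg : ∀ α ∈ s, α ≠ 0 → g α = 0) :
    ∀ α ∈ s, g α = 0 := by
  intro α hα
  by_cases h0 : α = 0
  · subst h0
    rw [Finset.sum_eq_single_of_mem 0 hα fun β hβ hne => by rw [hg β hβ hne, zero_smul],
      pMonomial_zero, Subalgebra.smul_def, smul_eq_mul, mul_one] at hsum
    exact_mod_cast hsum
  · exact hg α hα h0

lemma sum_smul_pMonomial_sub_single_eq_zero (D : Derivation k A A) (hS : ∀ x ∈ S, D x = 0)
    {b : B} (hb : D b = 1) (hD : ∀ b' ≠ b, D b' = 0) {s : Finset (B →₀ ℕ)}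
    {g : (B →₀ ℕ) → S} (hsum : ∑ α ∈ s, g α • pMonomial α = 0) :
    ∑ β ∈ (s.filter fun α => α b ≠ 0).image (· - Finsupp.single b 1),
      (((β + Finsupp.single b 1 : B →₀ ℕ) b : S) * g (β + Finsupp.single b 1)) •
        pMonomial β = 0 := by
  have hinj : Set.InjOn (· - Finsupp.single b 1) (s.filter fun α => α b ≠ 0) := by
    intro α hα β hβ h
    simp only [Finset.coe_filter, Set.mem_ofPred_eq] at hα hβ h
    rw [← Finsupp.sub_single_one_add_single_one hα.2,
      ← Finsupp.sub_single_one_add_single_one hβ.2, h]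
  have hDsum : ∑ α ∈ s, (g α : A) * D (pMonomial α) = 0 := by
    rw [← D.map_zero, ← hsum, map_sum]
    refine Finset.sum_congr rfl fun α _ => ?_
    rw [Subalgebra.smul_def, smul_eq_mul, D.leibniz, hS _ (g α).2, smul_zero, add_zero,
      smul_eq_mul]
  rw [Finset.sum_image hinj, ← hDsum]
  calc _ = ∑ α ∈ s with α b ≠ 0, (g α : A) * D (pMonomial α) := by
        refine Finset.sum_congr rfl fun α hα => ?_
        rw [Finsupp.sub_single_one_add_single_one (Finset.mem_filter.1 hα).2,
          D.map_pMonomial hb hD, Subalgebra.smul_def]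
        push_cast
        ring
    _ = _ := Finset.sum_filter_of_ne fun α _ hne => by
        contrapose! hne
        rw [D.map_pMonomial hb hD, hne, Nat.cast_zero, zero_mul, mul_zero]

variable {D : B → Derivation k A A} (p : ℕ) [Fact p.Prime] [CharP A p]

theorem eq_zero_of_sum_smul_pMonomial_eq_zero
    (hD : ∀ b b' : B, D b b' = if b' = b then 1 else 0) (hS : ∀ b, ∀ x ∈ S, D b x = 0)
    (n : ℕ) {s : Finset (B →₀ ℕ)}
    (hs : ∀ α ∈ s, α.degree ≤ n ∧ ∀ b, α b < p) {g : (B →₀ ℕ) → S}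
    (hsum : ∑ α ∈ s, g α • pMonomial α = 0) : ∀ α ∈ s, g α = 0 := by
  induction n generalizing s g with
  | zero =>
    refine eq_zero_of_sum_smul_pMonomial_eq_zero_of_ne_zero hsum fun α hα hne => ?_
    exact absurd ((Finsupp.degree_eq_zero_iff α).1 (Nat.le_zero.1 (hs α hα).1)) hne
  | succ n ih =>
    refine eq_zero_of_sum_smul_pMonomial_eq_zero_of_ne_zero hsum fun α hα hne => ?_
    obtain ⟨b, hb⟩ : ∃ b, α b ≠ 0 := Finsupp.ne_iff.1 hne
    have hshift := sum_smul_pMonomial_sub_single_eq_zero (D b) (hS b) (b := b) (by simp [hD])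
      (fun b' hb' => by simp [hD, hb']) hsum
    have hs' : ∀ β ∈ (s.filter fun α => α b ≠ 0).image (· - Finsupp.single b 1),
        β.degree ≤ n ∧ ∀ b', β b' < p := by
      simp only [Finset.mem_image, Finset.mem_filter]
      rintro _ ⟨γ, ⟨hγ, hγb⟩, rfl⟩
      have hdeg := congrArg Finsupp.degree (Finsupp.sub_single_one_add_single_one hγb)
      rw [map_add, Finsupp.degree_single] at hdeg
      obtain ⟨hγdeg, hγp⟩ := hs γ hγ
      exact ⟨by omega, fun b' => tsub_le_self.trans_lt (hγp b')⟩
    have hcoeff := ih hs' hshift (α - Finsupp.single b 1)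
      (Finset.mem_image_of_mem _ (Finset.mem_filter.2 ⟨hα, hb⟩))
    rw [Finsupp.sub_single_one_add_single_one hb] at hcoeff
    have hunit : IsUnit ((α b : ℕ) : A) := (CharP.isUnit_natCast_iff Fact.out).2 fun hdvd =>
      hb (Nat.eq_zero_of_dvd_of_lt hdvd ((hs α hα).2 b))
    exact Subtype.ext (hunit.mul_right_eq_zero.1 (by exact_mod_cast hcoeff))

theorem linearIndepOn_pMonomial (hD : ∀ b b' : B, D b b' = if b' = b then 1 else 0)
    (hS : ∀ b, ∀ x ∈ S, D b x = 0) : LinearIndepOn S pMonomial {α : B →₀ ℕ | ∀ b, α b < p} :=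
  linearIndepOn_iff'.2 fun s _ hs hsum =>
    eq_zero_of_sum_smul_pMonomial_eq_zero p hD hS (s.sup Finsupp.degree)
      (fun _ hα => ⟨Finset.le_sup hα, hs hα⟩) hsum

end Independence

theorem statement6 {k A : Type*} [CommRing k] [CommRing A] [Algebra k A]
    (p : ℕ) [Fact p.Prime] [CharP A p] (B : Set A)
    (h : IsDifferentialBasis k B) :
    IsPIndependent k p B := by
  obtain ⟨bas, hbas⟩ := h
  refine linearIndepOn_pMonomial (D := fun b => (bas.coord b).compDer (KaehlerDifferential.D k A))
    p (fun b b' => ?_) (fun _ _ hx => Derivation.map_eq_zero_of_mem_adjoin_pow p _ hx)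
  change bas.coord b (KaehlerDifferential.D k A b') = _
  rw [← hbas, Module.Basis.coord_apply, bas.repr_self, Finsupp.single_apply]
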